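/- Define A_{2n} = ((-1)^n (4n+1) / 2^(2n-1)) * Σ_{k=0}^{n} C(2n, n-k) * C(2n+2k, 2k) * C(1/2, k+1). Then for every non-negative integer n, A_{2n} = (2(4n+1)/π) * ∫_{-1}^{1} sqrt(1 - z^2) * P_{2n}(z) dz, where P_{2n} is the Legendre polynomial of degree 2n. -/

import Mathlib

/-- Generalized binomial coefficient `C(r, j) = r(r-1)⋯(r-j+1)/j!`. -/
noncomputable def genChoose (r : ℝ) (j : ℕ) : ℝ :=
  (∏ i ∈ Finset.range j, (r - i)) / (Nat.factorial j)

/-- The `n`-th Legendre polynomial via the Rodrigues formula,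
normalized so that `legendre n` evaluates to `1` at `1`. -/
noncomputable def legendre (n : ℕ) : Polynomial ℝ :=
  Polynomial.C (1 / (2 ^ n * (Nat.factorial n) : ℝ)) *
    Polynomial.derivative^[n] ((Polynomial.X ^ 2 - 1) ^ n)

/-- The coefficient `A_{2n}` from Theorem 1. -/
noncomputable def A (n : ℕ) : ℝ :=
  ((-1) ^ n * (4 * n + 1) / (2 : ℝ) ^ (2 * (n : ℤ) - 1)) *
    ∑ k ∈ Finset.range (n + 1),
      (Nat.choose (2 * n) (n - k) : ℝ) * (Nat.choose (2 * n + 2 * k) (2 * k) : ℝ) *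
        genChoose (1 / 2) (k + 1)

/-!
Under `z = cos θ` the even moments of `√(1 - z²)` become the Wallis-type integrals
`∫₀^π cos^{2k} θ sin² θ dθ = (∫₀^π cos^{2k} θ dθ) / (2k + 2) = π (-1)^k C(1/2, k+1)`.
Rodrigues' formula writes `P_{2n}` as an explicit even polynomial, and integrating it term by term
against `√(1 - z²)` gives the sum defining `A_{2n}`.
-/

open Real intervalIntegral Polynomial Finset

theorem integral_cos_pow_even (m : ℕ) :
    ∫ x in (0:ℝ)..π, cos x ^ (2 * m) = π * ∏ i ∈ range m, (2 * (i : ℝ) + 1) / (2 * i + 2) := by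
  induction m with
  | zero => simp
  | succ k ih =>
    rw [prod_range_succ_comm, mul_left_comm, ← ih, Nat.mul_succ, integral_cos_pow]
    norm_cast
    simp [-Nat.cast_add]

theorem integral_cos_pow_mul_sin_sq (n : ℕ) :
    ∫ x in (0:ℝ)..π, cos x ^ n * sin x ^ 2 = (∫ x in (0:ℝ)..π, cos x ^ n) / (n + 2) := by
  have hsplit : ∫ x in (0:ℝ)..π, cos x ^ n * sin x ^ 2 =
      (∫ x in (0:ℝ)..π, cos x ^ n) - ∫ x in (0:ℝ)..π, cos x ^ (n + 2) := by
    rw [← integral_sub ((by fun_prop : Continuous _).intervalIntegrable _ _)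
      ((by fun_prop : Continuous _).intervalIntegrable _ _)]
    refine integral_congr fun x _ => ?_
    simp only [sin_sq]
    ring
  rw [hsplit, integral_cos_pow]
  simp only [sin_pi, sin_zero, mul_zero, sub_self, zero_div, zero_add]
  field_simp
  ring

theorem integral_neg_one_one_eq_integral_comp_cos_mul_sin {g : ℝ → ℝ} (hg : Continuous g) :
    ∫ z in (-1:ℝ)..1, g z = ∫ x in (0:ℝ)..π, g (cos x) * sin x := by
  have h := integral_comp_mul_deriv (fun x _ => hasDerivAt_cos x)
    (continuous_sin.neg.continuousOn) hg (a := 0) (b := π)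
  simp only [Function.comp_apply, mul_neg, integral_neg, cos_zero, cos_pi] at h
  rw [integral_symm, ← h, neg_neg]

theorem integral_mul_sqrt_one_sub_sq {f : ℝ → ℝ} (hf : Continuous f) :
    ∫ z in (-1:ℝ)..1, f z * √(1 - z ^ 2) = ∫ x in (0:ℝ)..π, f (cos x) * sin x ^ 2 := by
  rw [integral_neg_one_one_eq_integral_comp_cos_mul_sin (by fun_prop)]
  refine integral_congr fun x hx => ?_
  rw [Set.uIcc_of_le pi_pos.le] at hx
  have hsin : √(1 - cos x ^ 2) = sin x := by
    rw [← sin_sq, sqrt_sq (sin_nonneg_of_nonneg_of_le_pi hx.1 hx.2)]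
  simp only [hsin]
  ring

theorem genChoose_succ (r : ℝ) (j : ℕ) :
    genChoose r (j + 1) = genChoose r j * ((r - j) / (j + 1)) := by
  simp only [genChoose, prod_range_succ, Nat.factorial_succ, Nat.cast_mul, Nat.cast_succ]
  field_simp

theorem genChoose_half_succ (k : ℕ) :
    genChoose (1 / 2) (k + 1) =
      (-1) ^ k * (∏ i ∈ range k, (2 * (i : ℝ) + 1) / (2 * i + 2)) / (2 * k + 2) := by
  induction k with
  | zero => norm_num [genChoose]
  | succ k ih =>
    rw [genChoose_succ, ih, prod_range_succ, pow_succ]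
    push_cast
    field_simp
    ring

theorem integral_pow_even_mul_sqrt_one_sub_sq (k : ℕ) :
    ∫ z in (-1:ℝ)..1, z ^ (2 * k) * √(1 - z ^ 2) = π * (-1) ^ k * genChoose (1 / 2) (k + 1) := by
  rw [integral_mul_sqrt_one_sub_sq (by fun_prop), integral_cos_pow_mul_sin_sq,
    integral_cos_pow_even, genChoose_half_succ]
  have hsign : (-1 : ℝ) ^ k * (-1) ^ k = 1 := by rw [← pow_add, ← two_mul, pow_mul]; norm_num
  push_cast
  linear_combination (-(π * ∏ i ∈ range k, (2 * (i : ℝ) + 1) / (2 * i + 2)) / (2 * k + 2)) * hsign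

theorem iterate_derivative_X_sq_sub_one_pow {R : Type*} [CommRing R] (m N : ℕ) :
    derivative^[m] (((X : R[X]) ^ 2 - 1) ^ N) =
      ∑ j ∈ range (N + 1),
        C ((-1 : R) ^ (j + N) * N.choose j * (2 * j).descFactorial m) * X ^ (2 * j - m) := by
  rw [sub_pow, iterate_derivative_sum]
  refine sum_congr rfl fun j _ => ?_
  have hterm : (-1 : R[X]) ^ (j + N) * (X ^ 2) ^ j * 1 ^ (N - j) * (N.choose j : R[X]) =
      C ((-1 : R) ^ (j + N) * N.choose j) * X ^ (2 * j) := by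
    simp only [one_pow, mul_one, ← pow_mul, C_mul, C_pow, C_neg, C_1, map_natCast]
    ring
  rw [hterm, iterate_derivative_C_mul, iterate_derivative_X_pow_eq_C_mul, ← mul_assoc, ← C_mul]

theorem legendre_two_mul (n : ℕ) :
    legendre (2 * n) = ∑ k ∈ range (n + 1),
      C ((-1 : ℝ) ^ (n + k) * (2 * n).choose (n - k) * (2 * n + 2 * k).choose (2 * k) / 2 ^ (2 * n))
        * X ^ (2 * k) := by
  rw [legendre, iterate_derivative_X_sq_sub_one_pow, show 2 * n + 1 = n + (n + 1) by ring,
    sum_range_add, sum_eq_zero, zero_add, mul_sum]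
  -- the first `n` summands are killed by the `2n` derivatives
  · refine sum_congr rfl fun k hk => ?_
    have hk : k ≤ n := Nat.lt_succ_iff.mp (mem_range.mp hk)
    have hdesc : ((2 * (n + k)).descFactorial (2 * n) : ℝ) =
        (2 * n).factorial * (2 * n + 2 * k).choose (2 * k) := by
      rw [Nat.descFactorial_eq_factorial_mul_choose, mul_add,
        Nat.choose_symm_add, Nat.cast_mul]
    rw [← mul_assoc, ← C_mul, show 2 * (n + k) - 2 * n = 2 * k by omega, hdesc,
      ← Nat.choose_symm_add, Nat.choose_symm_of_eq_add (by omega : 2 * n = (n + k) + (n - k))]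
    congr 2
    rw [pow_add, pow_mul _ 2 n]
    field_simp
    norm_num
  · intro j hj
    rw [Nat.descFactorial_eq_zero_iff_lt.mpr (by have := mem_range.mp hj; omega)]
    simp

theorem stmt_3 (n : ℕ) :
    A n = (2 * (4 * n + 1) / Real.pi) *
      ∫ z in (-1:ℝ)..1, Real.sqrt (1 - z ^ 2) * (legendre (2 * n)).eval z := by
  have hintegral : ∫ z in (-1:ℝ)..1, √(1 - z ^ 2) * (legendre (2 * n)).eval z =
      ∑ k ∈ range (n + 1),
        (-1 : ℝ) ^ (n + k) * (2 * n).choose (n - k) * (2 * n + 2 * k).choose (2 * k) / 2 ^ (2 * n)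
          * (π * (-1) ^ k * genChoose (1 / 2) (k + 1)) := by
    simp only [legendre_two_mul, eval_finsetSum, eval_mul, eval_C, eval_pow, eval_X, mul_sum]
    rw [integral_finsetSum fun k _ => (by fun_prop : Continuous _).intervalIntegrable _ _]
    refine sum_congr rfl fun k _ => ?_
    rw [← integral_pow_even_mul_sqrt_one_sub_sq, ← integral_const_mul]
    exact integral_congr fun z _ => by ring
  have hsign (k : ℕ) : (-1 : ℝ) ^ (n + k) * (-1) ^ k = (-1) ^ n := by
    rw [pow_add, mul_assoc, ← pow_add, ← two_mul, pow_mul]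
    norm_num
  have htwo : (2 : ℝ) ^ (2 * (n : ℤ) - 1) = 2 ^ (2 * n) / 2 := by
    rw [zpow_sub₀ two_ne_zero, zpow_one, ← zpow_natCast]
    norm_cast
  rw [A, hintegral, htwo, mul_sum, mul_sum]
  refine sum_congr rfl fun k _ => ?_
  rw [← hsign k]
  field_simp
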